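/- Let d ≥ 1 and α ∈ ℝ. Define ψ_{α,d}(x) = (1 + |x|²)^{(2−d)/4 − α/2} and V_{α,d}(x) = (4α² − (d−2)²)/(4(1 + |x|²)) + (1 − (α + d/2)²)/(1 + |x|²)². Then for every φ ∈ C_c^∞(ℝ^d; ℝ), with ψ = ψ_{α,d} · φ, the ground state representation holds: ∫_{ℝ^d} |∇ψ(x)|² dx + ∫_{ℝ^d} V_{α,d}(x) ψ(x)² dx = ∫_{ℝ^d} |∇φ(x)|² ψ_{α,d}(x)² dx. -/

import Mathlib

open MeasureTheory Real Filter

noncomputable section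

/-- The function `ψ_{α,d}(x) = (1 + |x|²)^{(2−d)/4 − α/2}`. -/
def psiAD (d : ℕ) (α : ℝ) (x : EuclideanSpace ℝ (Fin d)) : ℝ :=
  (1 + ‖x‖ ^ 2) ^ ((2 - (d : ℝ)) / 4 - α / 2)

/-- The potential `V_{α,d}(x) = (4α² − (d−2)²)/(4(1+|x|²)) + (1 − (α+d/2)²)/(1+|x|²)²`. -/
def Vad (d : ℕ) (α : ℝ) (x : EuclideanSpace ℝ (Fin d)) : ℝ :=
  (4 * α ^ 2 - ((d : ℝ) - 2) ^ 2) / (4 * (1 + ‖x‖ ^ 2))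
    + (1 - (α + (d : ℝ) / 2) ^ 2) / (1 + ‖x‖ ^ 2) ^ 2

/-- The exponent in `ψ_{α,d}`. -/
def cAD (d : ℕ) (α : ℝ) : ℝ := (2 - (d : ℝ)) / 4 - α / 2

/-- `∂ᵢ ψ_{α,d}`. -/
def DuAD (d : ℕ) (α : ℝ) (i : Fin d) (x : EuclideanSpace ℝ (Fin d)) : ℝ :=
  2 * cAD d α * (1 + ‖x‖ ^ 2) ^ (cAD d α - 1) * x i

/-- `ψ ∂ᵢψ`. -/
def ggAD (d : ℕ) (α : ℝ) (i : Fin d) (x : EuclideanSpace ℝ (Fin d)) : ℝ :=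
  2 * cAD d α * (1 + ‖x‖ ^ 2) ^ (2 * cAD d α - 1) * x i

/-- `∂ᵢ(ψ ∂ᵢψ)`. -/
def DggAD (d : ℕ) (α : ℝ) (i : Fin d) (x : EuclideanSpace ℝ (Fin d)) : ℝ :=
  2 * cAD d α * (1 + ‖x‖ ^ 2) ^ (2 * cAD d α - 1)
    + 4 * cAD d α * (2 * cAD d α - 1) * (1 + ‖x‖ ^ 2) ^ (2 * cAD d α - 2) * (x i) ^ 2

variable {d : ℕ} {α : ℝ}

lemma norm_sq_coords (w : EuclideanSpace ℝ (Fin d)) : ‖w‖ ^ 2 = ∑ i, (w i) ^ 2 := by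
  rw [EuclideanSpace.norm_eq, Real.sq_sqrt (by positivity)]
  simp [sq_abs]

lemma norm_gradient_sq (f : EuclideanSpace ℝ (Fin d) → ℝ) (x : EuclideanSpace ℝ (Fin d)) :
    ‖gradient f x‖ ^ 2 = ∑ i, (fderiv ℝ f x (EuclideanSpace.single i 1)) ^ 2 := by
  rw [norm_sq_coords]
  congr 1; ext i
  have h1 : gradient f x i
      = @inner ℝ _ _ (gradient f x) (EuclideanSpace.single i (1:ℝ)) := by
    rw [EuclideanSpace.inner_single_right]; simp
  rw [h1, gradient, InnerProductSpace.toDual_symm_apply]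

lemma hasFDerivAt_S_rpow (r : ℝ) (x : EuclideanSpace ℝ (Fin d)) :
    HasFDerivAt (fun y : EuclideanSpace ℝ (Fin d) => (1 + ‖y‖ ^ 2) ^ r)
      ((r * (1 + ‖x‖ ^ 2) ^ (r - 1) * 2) • innerSL ℝ x) x := by
  have hS : (0:ℝ) < 1 + ‖x‖ ^ 2 := by positivity
  have h1 : HasFDerivAt (fun y : EuclideanSpace ℝ (Fin d) => 1 + ‖y‖ ^ 2)
      (2 • innerSL ℝ x) x := by
    exact ((hasFDerivAt_id x).norm_sq.const_add (1:ℝ)).congr_fderiv (by ext v; simp)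
  have h2 : HasDerivAt (fun t : ℝ => t ^ r) (r * (1 + ‖x‖ ^ 2) ^ (r - 1)) (1 + ‖x‖ ^ 2) :=
    Real.hasDerivAt_rpow_const (Or.inl hS.ne')
  have := h2.comp_hasFDerivAt x h1
  refine this.congr_fderiv ?_
  ext v
  simp [mul_comm, mul_assoc, mul_left_comm]

lemma eval_innerSL (x : EuclideanSpace ℝ (Fin d)) (i : Fin d) :
    innerSL ℝ x (EuclideanSpace.single i (1:ℝ)) = x i := by
  simp [innerSL_apply_apply, EuclideanSpace.inner_single_right]

lemma hasFDerivAt_gen (a r : ℝ) (i : Fin d) (x : EuclideanSpace ℝ (Fin d)) :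
    HasFDerivAt (fun y : EuclideanSpace ℝ (Fin d) => a * (1 + ‖y‖ ^ 2) ^ r * y i)
      ((a * (1 + ‖x‖ ^ 2) ^ r) • (EuclideanSpace.proj i : EuclideanSpace ℝ (Fin d) →L[ℝ] ℝ)
        + (x i) • ((a * (r * (1 + ‖x‖ ^ 2) ^ (r - 1) * 2)) • innerSL ℝ x)) x := by
  have h1 : HasFDerivAt (fun y : EuclideanSpace ℝ (Fin d) => a * (1 + ‖y‖ ^ 2) ^ r)
      ((a * (r * (1 + ‖x‖ ^ 2) ^ (r - 1) * 2)) • innerSL ℝ x) x := by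
    simpa [smul_smul] using (hasFDerivAt_S_rpow r x).const_mul a
  have h2 : HasFDerivAt (fun y : EuclideanSpace ℝ (Fin d) => y i)
      (EuclideanSpace.proj i : EuclideanSpace ℝ (Fin d) →L[ℝ] ℝ) x := by
    have := (EuclideanSpace.proj (𝕜 := ℝ) (i := i) (ι := Fin d)).hasFDerivAt (x := x)
    simpa [PiLp.proj_apply] using this
  exact h1.mul h2

lemma continuous_S_rpow (r : ℝ) :
    Continuous fun y : EuclideanSpace ℝ (Fin d) => (1 + ‖y‖ ^ 2) ^ r := by
  apply Continuous.rpow_const (by continuity)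
  intro x; left; positivity

/-- fderiv of `ψ·φ` at basis vector `i`. -/
lemma fderiv_upphi (φ : EuclideanSpace ℝ (Fin d) → ℝ) (hφd : Differentiable ℝ φ)
    (i : Fin d) (x : EuclideanSpace ℝ (Fin d)) :
    fderiv ℝ (fun y => psiAD d α y * φ y) x (EuclideanSpace.single i 1)
      = DuAD d α i x * φ x
        + psiAD d α x * fderiv ℝ φ x (EuclideanSpace.single i 1) := by
  have h := ((hasFDerivAt_S_rpow (cAD d α) x).mul (hφd x).hasFDerivAt).fderiv
  have he : (fun y => psiAD d α y * φ y)
      = fun y : EuclideanSpace ℝ (Fin d) => (1 + ‖y‖ ^ 2) ^ (cAD d α) * φ y := rfl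
  erw [he, h]
  simp only [ContinuousLinearMap.add_apply, ContinuousLinearMap.coe_smul', Pi.smul_apply,
    smul_eq_mul, eval_innerSL, DuAD, psiAD, cAD]
  ring

/-- fderiv of `g i · φ` at basis vector `i`. -/
lemma fderiv_gphi (φ : EuclideanSpace ℝ (Fin d) → ℝ) (hφd : Differentiable ℝ φ)
    (i : Fin d) (x : EuclideanSpace ℝ (Fin d)) :
    fderiv ℝ (fun y => ggAD d α i y * φ y) x (EuclideanSpace.single i 1)
      = DggAD d α i x * φ x
        + ggAD d α i x * fderiv ℝ φ x (EuclideanSpace.single i 1) := by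
  have h := ((hasFDerivAt_gen (2 * cAD d α) (2 * cAD d α - 1) i x).mul
    (hφd x).hasFDerivAt).fderiv
  have he : (fun y => ggAD d α i y * φ y)
      = fun y : EuclideanSpace ℝ (Fin d) =>
        (2 * cAD d α) * (1 + ‖y‖ ^ 2) ^ (2 * cAD d α - 1) * y i * φ y := rfl
  erw [he, h]
  simp only [ContinuousLinearMap.add_apply, ContinuousLinearMap.coe_smul', Pi.smul_apply,
    smul_eq_mul, eval_innerSL, PiLp.proj_apply, EuclideanSpace.single_apply,
    eq_self_iff_true, if_true, DggAD, ggAD]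
  ring

lemma ug_eq (i : Fin d) (x : EuclideanSpace ℝ (Fin d)) :
    psiAD d α x * DuAD d α i x = ggAD d α i x := by
  have hS : (0:ℝ) < 1 + ‖x‖ ^ 2 := by positivity
  have key : (1 + ‖x‖ ^ 2) ^ (cAD d α) * (1 + ‖x‖ ^ 2) ^ (cAD d α - 1)
      = (1 + ‖x‖ ^ 2) ^ (2 * cAD d α - 1) := by
    rw [← Real.rpow_add hS]; ring_nf
  have hu : psiAD d α x = (1 + ‖x‖ ^ 2) ^ (cAD d α) := rfl
  rw [hu, DuAD, ggAD, ← key]; ring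

lemma pointwise_key (x : EuclideanSpace ℝ (Fin d)) (t : ℝ) :
    (∑ i, (DuAD d α i x * t) ^ 2)
      + Vad d α x * (psiAD d α x * t) ^ 2
      - (∑ i, DggAD d α i x) * t ^ 2 = 0 := by
  have hS : (0:ℝ) < 1 + ‖x‖ ^ 2 := by positivity
  set c := cAD d α with hc
  have h1 : (∑ i, (DuAD d α i x * t) ^ 2)
      = (4 * c ^ 2 * ((1 + ‖x‖ ^ 2) ^ (c - 1)) ^ 2 * t ^ 2) * ‖x‖ ^ 2 := by
    calc (∑ i, (DuAD d α i x * t) ^ 2)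
        = ∑ i, (4 * c ^ 2 * ((1 + ‖x‖ ^ 2) ^ (c - 1)) ^ 2 * t ^ 2) * (x i) ^ 2 :=
          Finset.sum_congr rfl fun i _ => by rw [DuAD, ← hc]; ring
      _ = (4 * c ^ 2 * ((1 + ‖x‖ ^ 2) ^ (c - 1)) ^ 2 * t ^ 2) * ∑ i, (x i) ^ 2 :=
          (Finset.mul_sum _ _ _).symm
      _ = _ := by rw [← norm_sq_coords]
  have h2 : (∑ i, DggAD d α i x)
      = (d : ℝ) * (2 * c * (1 + ‖x‖ ^ 2) ^ (2 * c - 1))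
        + 4 * c * (2 * c - 1) * (1 + ‖x‖ ^ 2) ^ (2 * c - 2) * ‖x‖ ^ 2 := by
    simp only [DggAD, ← hc]
    rw [Finset.sum_add_distrib, Finset.sum_const, ← Finset.mul_sum, ← norm_sq_coords]
    simp [mul_comm]
  rw [h1, h2]
  have eA : ((1 + ‖x‖ ^ 2) ^ (c - 1)) ^ 2 = (1 + ‖x‖ ^ 2) ^ (2 * c - 2) := by
    rw [sq, ← Real.rpow_add hS]; ring_nf
  have eB : psiAD d α x ^ 2
      = (1 + ‖x‖ ^ 2) ^ (2 * c - 2) * ((1 + ‖x‖ ^ 2) * (1 + ‖x‖ ^ 2)) := by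
    show ((1 + ‖x‖ ^ 2) ^ c) ^ 2 = _
    rw [show (1 + ‖x‖ ^ 2) * (1 + ‖x‖ ^ 2)
        = (1 + ‖x‖ ^ 2) ^ (1:ℝ) * (1 + ‖x‖ ^ 2) ^ (1:ℝ) by rw [Real.rpow_one]]
    rw [sq, ← Real.rpow_add hS, ← Real.rpow_add hS, ← Real.rpow_add hS]
    ring_nf
  have eC : (1 + ‖x‖ ^ 2) ^ (2 * c - 1) = (1 + ‖x‖ ^ 2) ^ (2 * c - 2) * (1 + ‖x‖ ^ 2) := by
    nth_rewrite 3 [show (1 + ‖x‖ ^ 2) = (1 + ‖x‖ ^ 2) ^ (1:ℝ) by rw [Real.rpow_one]]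
    rw [← Real.rpow_add hS]
    ring_nf
  rw [mul_pow, eA, eB, eC]
  rw [Vad, hc, cAD]
  have h4 : (4 : ℝ) * (1 + ‖x‖ ^ 2) ≠ 0 := by positivity
  have h5 : ((1 + ‖x‖ ^ 2) : ℝ) ^ 2 ≠ 0 := by positivity
  field_simp
  ring

/-- **Ground state representation.** For every `φ ∈ C_c^∞(ℝ^d; ℝ)`, with `ψ = ψ_{α,d} φ`,
`∫ |∇ψ|² dx + ∫ V_{α,d} ψ² dx = ∫ |∇φ|² ψ_{α,d}² dx`. -/
theorem ground_state_representation (d : ℕ) (hd : 1 ≤ d) (α : ℝ)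
    (φ : EuclideanSpace ℝ (Fin d) → ℝ) (hφ : ContDiff ℝ (⊤ : ℕ∞) φ) (hφc : HasCompactSupport φ) :
    (∫ x : EuclideanSpace ℝ (Fin d),
        ‖gradient (fun y : EuclideanSpace ℝ (Fin d) => psiAD d α y * φ y) x‖ ^ 2)
      + (∫ x : EuclideanSpace ℝ (Fin d), Vad d α x * (psiAD d α x * φ x) ^ 2)
      = ∫ x : EuclideanSpace ℝ (Fin d), ‖gradient φ x‖ ^ 2 * psiAD d α x ^ 2 := by
  have hφd : Differentiable ℝ φ := hφ.differentiable (by simp)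
  -- continuity facts
  have hcu : Continuous (psiAD d α) := continuous_S_rpow _
  have hcDu : ∀ i, Continuous (DuAD d α i) := fun i =>
    (continuous_const.mul (continuous_S_rpow _)).mul (PiLp.continuous_apply (p := 2) (β := fun _ : Fin d => ℝ) i)
  have hcgg : ∀ i, Continuous (ggAD d α i) := fun i =>
    (continuous_const.mul (continuous_S_rpow _)).mul (PiLp.continuous_apply (p := 2) (β := fun _ : Fin d => ℝ) i)
  have hcDgg : ∀ i, Continuous (DggAD d α i) := fun i =>
    (continuous_const.mul (continuous_S_rpow _)).add
      ((continuous_const.mul (continuous_S_rpow _)).mul ((PiLp.continuous_apply (p := 2) (β := fun _ : Fin d => ℝ) i).pow 2))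
  have hcDφ : ∀ i : Fin d, Continuous fun x => fderiv ℝ φ x (EuclideanSpace.single i 1) :=
    fun i => (hφ.continuous_fderiv (by simp)).clm_apply continuous_const
  have hcV : Continuous (Vad d α) := by
    apply Continuous.add
    · exact continuous_const.div (by continuity) (fun x => by positivity)
    · exact continuous_const.div (by continuity) (fun x => by positivity)
  -- vanishing facts
  have hφ0 : ∀ x ∉ tsupport φ, φ x = 0 := fun x hx => image_eq_zero_of_notMem_tsupport hx
  have hDφ0 : ∀ i : Fin d, ∀ x ∉ tsupport φ,
      fderiv ℝ φ x (EuclideanSpace.single i 1) = 0 := by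
    intro i x hx
    have : fderiv ℝ φ x = 0 := by
      by_contra h
      exact hx (support_fderiv_subset ℝ (Function.mem_support.2 h))
    rw [this]; rfl
  -- integrability maker
  have mkInt : ∀ h : EuclideanSpace ℝ (Fin d) → ℝ, Continuous h →
      (∀ x ∉ tsupport φ, h x = 0) → Integrable h := fun h hc h0 =>
    hc.integrable_of_hasCompactSupport (HasCompactSupport.intro hφc h0)
  -- the integrable functions we need
  have intA : ∀ i, Integrable fun x => (DuAD d α i x * φ x) ^ 2 := fun i =>
    mkInt _ (((hcDu i).mul hφ.continuous).pow 2) (fun x hx => by rw [hφ0 x hx]; ring)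
  have intB : ∀ i, Integrable fun x =>
      ggAD d α i x * φ x * fderiv ℝ φ x (EuclideanSpace.single i 1) := fun i =>
    mkInt _ (((hcgg i).mul hφ.continuous).mul (hcDφ i)) (fun x hx => by rw [hφ0 x hx]; ring)
  have intC : ∀ i, Integrable fun x =>
      (psiAD d α x * fderiv ℝ φ x (EuclideanSpace.single i 1)) ^ 2 := fun i =>
    mkInt _ ((hcu.mul (hcDφ i)).pow 2) (fun x hx => by rw [hDφ0 i x hx]; ring)
  have intD : ∀ i, Integrable fun x => DggAD d α i x * φ x ^ 2 := fun i =>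
    mkInt _ ((hcDgg i).mul (hφ.continuous.pow 2)) (fun x hx => by rw [hφ0 x hx]; ring)
  have intM : Integrable fun x => Vad d α x * (psiAD d α x * φ x) ^ 2 :=
    mkInt _ (hcV.mul ((hcu.mul hφ.continuous).pow 2)) (fun x hx => by rw [hφ0 x hx]; ring)
  have intF : ∀ i, Integrable fun x =>
      (DuAD d α i x * φ x + psiAD d α x * fderiv ℝ φ x (EuclideanSpace.single i 1)) ^ 2 :=
    fun i => mkInt _ ((((hcDu i).mul hφ.continuous).add (hcu.mul (hcDφ i))).pow 2)
      (fun x hx => by rw [hφ0 x hx, hDφ0 i x hx]; ring)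
  -- differentiability of g i * φ
  have hgdiff : ∀ i, Differentiable ℝ fun y => ggAD d α i y * φ y := fun i x =>
    ((hasFDerivAt_gen (2 * cAD d α) (2 * cAD d α - 1) i x).mul (hφd x).hasFDerivAt).differentiableAt
  -- integration by parts for each coordinate
  have ibp : ∀ i : Fin d,
      2 * (∫ x, ggAD d α i x * φ x * fderiv ℝ φ x (EuclideanSpace.single i 1))
        = - ∫ x, DggAD d α i x * φ x ^ 2 := by
    intro i
    have hf'g : Integrable fun x =>
        fderiv ℝ (fun y => ggAD d α i y * φ y) x (EuclideanSpace.single i 1) * φ x := by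
      refine (((intD i).add (mkInt (fun x => ggAD d α i x *
          fderiv ℝ φ x (EuclideanSpace.single i 1) * φ x)
          (((hcgg i).mul (hcDφ i)).mul hφ.continuous)
          (fun x hx => by
            show ggAD d α i x * fderiv ℝ φ x (EuclideanSpace.single i 1) * φ x = 0
            rw [hφ0 x hx]; ring))).congr ?_)
      filter_upwards with x
      simp only [Pi.add_apply]
      rw [fderiv_gphi φ hφd]
      ring
    have hfg' : Integrable fun x =>
        (ggAD d α i x * φ x) * fderiv ℝ φ x (EuclideanSpace.single i 1) := intB i
    have hfg : Integrable fun x => (ggAD d α i x * φ x) * φ x :=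
      mkInt _ (((hcgg i).mul hφ.continuous).mul hφ.continuous)
        (fun x hx => by rw [hφ0 x hx]; ring)
    have h := integral_mul_fderiv_eq_neg_fderiv_mul_of_integrable hf'g hfg' hfg (fun x _ => hgdiff i x) (fun x _ => hφd x)
    -- h : ∫ (g φ) * Dφ = - ∫ fderiv(gφ) e_i * φ
    have h2 : (∫ x, fderiv ℝ (fun y => ggAD d α i y * φ y) x (EuclideanSpace.single i 1) * φ x)
        = (∫ x, DggAD d α i x * φ x ^ 2)
          + ∫ x, ggAD d α i x * φ x * fderiv ℝ φ x (EuclideanSpace.single i 1) := by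
      rw [← integral_add (intD i) (intB i)]
      apply integral_congr_ae
      filter_upwards with x
      rw [fderiv_gphi φ hφd]
      ring
    have h3 : (∫ x, ggAD d α i x * φ x * fderiv ℝ φ x (EuclideanSpace.single i 1))
        = ∫ x, (ggAD d α i x * φ x) * fderiv ℝ φ x (EuclideanSpace.single i 1) := by
      apply integral_congr_ae; filter_upwards with x; ring
    linarith [h, h2, h3]
  -- expansion of each ∫ F i
  have expF : ∀ i : Fin d,
      (∫ x, (DuAD d α i x * φ x
          + psiAD d α x * fderiv ℝ φ x (EuclideanSpace.single i 1)) ^ 2)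
        = (∫ x, (DuAD d α i x * φ x) ^ 2)
          - (∫ x, DggAD d α i x * φ x ^ 2)
          + ∫ x, (psiAD d α x * fderiv ℝ φ x (EuclideanSpace.single i 1)) ^ 2 := by
    intro i
    have step : (∫ x, (DuAD d α i x * φ x
          + psiAD d α x * fderiv ℝ φ x (EuclideanSpace.single i 1)) ^ 2)
        = (∫ x, (DuAD d α i x * φ x) ^ 2)
          + (2 * ∫ x, ggAD d α i x * φ x * fderiv ℝ φ x (EuclideanSpace.single i 1))
          + ∫ x, (psiAD d α x * fderiv ℝ φ x (EuclideanSpace.single i 1)) ^ 2 := by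
      have i2B : Integrable (fun x => 2 * (ggAD d α i x * φ x
          * fderiv ℝ φ x (EuclideanSpace.single i 1))) volume := (intB i).const_mul 2
      have iA2B : Integrable (fun x => (DuAD d α i x * φ x) ^ 2
          + 2 * (ggAD d α i x * φ x * fderiv ℝ φ x (EuclideanSpace.single i 1))) volume :=
        (intA i).add i2B
      rw [← integral_const_mul, ← integral_add (intA i) i2B, ← integral_add iA2B (intC i)]
      apply integral_congr_ae
      filter_upwards with x
      have hug := ug_eq (d := d) (α := α) i x
      linear_combination (2 * φ x * fderiv ℝ φ x (EuclideanSpace.single i 1)) * hug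
    rw [step, ibp i]
    ring
  -- main computation
  have head : (∫ x, ‖gradient (fun y : EuclideanSpace ℝ (Fin d) => psiAD d α y * φ y) x‖ ^ 2)
      = ∑ i : Fin d, ∫ x, (DuAD d α i x * φ x
          + psiAD d α x * fderiv ℝ φ x (EuclideanSpace.single i 1)) ^ 2 := by
    rw [← integral_finset_sum _ (fun i _ => intF i)]
    apply integral_congr_ae
    filter_upwards with x
    rw [norm_gradient_sq]
    exact Finset.sum_congr rfl fun i _ => by rw [fderiv_upphi φ hφd]
  have tail : (∫ x, ‖gradient φ x‖ ^ 2 * psiAD d α x ^ 2)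
      = ∑ i : Fin d, ∫ x, (psiAD d α x * fderiv ℝ φ x (EuclideanSpace.single i 1)) ^ 2 := by
    rw [← integral_finset_sum _ (fun i _ => intC i)]
    apply integral_congr_ae
    filter_upwards with x
    rw [norm_gradient_sq, Finset.sum_mul]
    exact Finset.sum_congr rfl fun i _ => by ring
  have claim1 : (∑ i : Fin d, ∫ x, (DuAD d α i x * φ x) ^ 2)
      + (∫ x, Vad d α x * (psiAD d α x * φ x) ^ 2)
      - ∑ i : Fin d, ∫ x, DggAD d α i x * φ x ^ 2 = 0 := by
    have intSA : Integrable (fun x => ∑ i : Fin d, (DuAD d α i x * φ x) ^ 2) volume :=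
      integrable_finset_sum _ (fun i _ => intA i)
    have intSD : Integrable (fun x => ∑ i : Fin d, DggAD d α i x * φ x ^ 2) volume :=
      integrable_finset_sum _ (fun i _ => intD i)
    have intSAM : Integrable (fun x => (∑ i : Fin d, (DuAD d α i x * φ x) ^ 2)
        + Vad d α x * (psiAD d α x * φ x) ^ 2) volume := intSA.add intM
    rw [← integral_finset_sum _ (fun i _ => intA i),
      ← integral_finset_sum _ (fun i _ => intD i),
      ← integral_add intSA intM,
      ← integral_sub intSAM intSD]
    have : (fun x => (∑ i, (DuAD d α i x * φ x) ^ 2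
        + Vad d α x * (psiAD d α x * φ x) ^ 2) - ∑ i, DggAD d α i x * φ x ^ 2)
        = fun _ => (0:ℝ) := by
      funext x
      have := pointwise_key (d := d) (α := α) x (φ x)
      rw [Finset.sum_mul] at this
      linarith [this]
    rw [this, integral_zero]
  rw [head, tail]
  have hsum : (∑ i : Fin d, ∫ x, (DuAD d α i x * φ x
        + psiAD d α x * fderiv ℝ φ x (EuclideanSpace.single i 1)) ^ 2)
      = (∑ i : Fin d, ∫ x, (DuAD d α i x * φ x) ^ 2)
        - (∑ i : Fin d, ∫ x, DggAD d α i x * φ x ^ 2)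
        + ∑ i : Fin d, ∫ x, (psiAD d α x * fderiv ℝ φ x (EuclideanSpace.single i 1)) ^ 2 := by
    rw [← Finset.sum_sub_distrib, ← Finset.sum_add_distrib]
    exact Finset.sum_congr rfl fun i _ => expF i
  rw [hsum]
  linarith [claim1]

end
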